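/- arXiv:1103.2513 — 4 statements merged into one kernel-verified Lean document; each statement's English description precedes it below -/
import Mathlib

section
/- Let G be a connected simple graph such that for every edge e = uv of G one has min(m_u(e), m_v(e)) = 1. If G contains at least two branching vertices, then G contains exactly two branching vertices and the distance between any two branching vertices of G equals 2. -/
/-!
Distance-based topological indices (PI, vertex PI, Szeged, edge Szeged, Zagreb indices,
triangle counts) for finite simple graphs, following Ilić, "Note on PI and Szeged indices".
-/

open scoped Classical
open Finset

namespace PaperDefs

variable {V : Type*} [Fintype V]

/-- `nCloser G u v` is `n_u(e)` for the edge `e = uv`: the number of vertices of `G`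
whose distance to `u` is strictly smaller than their distance to `v`. -/
noncomputable def nCloser (G : SimpleGraph V) (u v : V) : ℕ :=
  (Finset.univ.filter fun w => G.dist w u < G.dist w v).card

/-- The distance `d'(w, e) = min (d w u, d w v)` between a vertex `w` and an edge `e = uv`. -/
noncomputable def vertexEdgeDist (G : SimpleGraph V) (w : V) (e : Sym2 V) : ℕ :=
  Sym2.lift ⟨fun x y => min (G.dist w x) (G.dist w y), fun _ _ => min_comm _ _⟩ e

/-- `mCloser G u v` is `m_u(e)` for the edge `e = uv`: the number of edges of `G`
whose distance to `u` is strictly smaller than their distance to `v`. -/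
noncomputable def mCloser (G : SimpleGraph V) (u v : V) : ℕ :=
  (G.edgeFinset.filter fun f => vertexEdgeDist G u f < vertexEdgeDist G v f).card

/-- The vertex PI index `PI_v(G) = Σ_{e = uv ∈ E} (n_u(e) + n_v(e))`. -/
noncomputable def PIv (G : SimpleGraph V) : ℕ :=
  ∑ e ∈ G.edgeFinset,
    Sym2.lift ⟨fun u v => nCloser G u v + nCloser G v u, fun _ _ => add_comm _ _⟩ e

/-- The Szeged index `Sz(G) = Σ_{e = uv ∈ E} n_u(e) · n_v(e)`. -/
noncomputable def Sz (G : SimpleGraph V) : ℕ :=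
  ∑ e ∈ G.edgeFinset,
    Sym2.lift ⟨fun u v => nCloser G u v * nCloser G v u, fun _ _ => mul_comm _ _⟩ e

/-- The PI index `PI(G) = Σ_{e = uv ∈ E} (m_u(e) + m_v(e))`. -/
noncomputable def PI (G : SimpleGraph V) : ℕ :=
  ∑ e ∈ G.edgeFinset,
    Sym2.lift ⟨fun u v => mCloser G u v + mCloser G v u, fun _ _ => add_comm _ _⟩ e

/-- The edge Szeged index `Sz_e(G) = Σ_{e = uv ∈ E} m_u(e) · m_v(e)`. -/
noncomputable def Sze (G : SimpleGraph V) : ℕ :=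
  ∑ e ∈ G.edgeFinset,
    Sym2.lift ⟨fun u v => mCloser G u v * mCloser G v u, fun _ _ => mul_comm _ _⟩ e

/-- The first Zagreb index `M₁(G) = Σ_{v ∈ V} deg(v)²`. -/
noncomputable def M1 (G : SimpleGraph V) : ℕ :=
  ∑ v : V, G.degree v ^ 2

/-- The second Zagreb index `M₂(G) = Σ_{uv ∈ E} deg(u) · deg(v)`. -/
noncomputable def M2 (G : SimpleGraph V) : ℕ :=
  ∑ e ∈ G.edgeFinset,
    Sym2.lift ⟨fun u v => G.degree u * G.degree v, fun _ _ => mul_comm _ _⟩ e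

/-- `triCount G` is `t(G)`, the number of triangles (subgraphs isomorphic to `K₃`) in `G`. -/
noncomputable def triCount (G : SimpleGraph V) : ℕ :=
  (G.cliqueFinset 3).card

/-- `triEdge G u v` is `t(e)`, the number of triangles containing the edge `e = uv`,
i.e. the number of common neighbors of `u` and `v`. -/
noncomputable def triEdge (G : SimpleGraph V) (u v : V) : ℕ :=
  (Finset.univ.filter fun w => G.Adj u w ∧ G.Adj v w).card

end PaperDefs

open PaperDefs

/-! Every edge `e = ux` at a branching vertex `u` has `m_u(e) ≥ 2`, witnessed by the other edges
at `u`, so the hypothesis forces `m_x(e) = 1`: at most one edge is closer to `x` than to `u`.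
Hence branching vertices are not adjacent. If two of them were at distance `k ≥ 3`, the second
edge of a geodesic and its last edge would be two edges closer to its second vertex than to its
first. If `d(a, w) = 2` with `a` branching and `a - y - w` a geodesic, then every neighbour `z` of
`w` is adjacent to `a`, since otherwise `yw` and `wz` are two edges closer to `y` than to `a`.
A third branching vertex `w` would therefore have a neighbour adjacent to all three, and that
neighbour would be a branching vertex adjacent to `w`. -/

namespace SimpleGraph

variable {V : Type*} {G : SimpleGraph V}

lemma Reachable.exists_adj_dist_add_one_eq {u v : V} (huv : G.Reachable u v) (hne : u ≠ v) :
    ∃ x, G.Adj u x ∧ G.dist x v + 1 = G.dist u v := by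
  obtain ⟨p, hp⟩ := huv.exists_walk_length_eq_dist
  cases p with
  | nil => exact absurd rfl hne
  | cons hux q =>
    refine ⟨_, hux, le_antisymm ?_ ?_⟩
    · simpa [← hp] using dist_le q
    · have := q.reachable.dist_triangle_right u
      simp only [dist_eq_one_iff_adj.mpr hux] at this
      omega

end SimpleGraph

namespace PaperDefs

open SimpleGraph

variable {V : Type*} {G : SimpleGraph V}

@[simp]
lemma vertexEdgeDist_mk (w x y : V) :
    vertexEdgeDist G w s(x, y) = min (G.dist w x) (G.dist w y) := rfl

variable [Fintype V]

def MinCloserEqOne (G : SimpleGraph V) : Prop :=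
  ∀ u v : V, G.Adj u v → min (mCloser G u v) (mCloser G v u) = 1

lemma degree_sub_one_le_mCloser {u v : V} (huv : G.Adj u v) :
    G.degree u - 1 ≤ mCloser G u v := by
  have hsub : (G.incidenceFinset u).erase s(u, v) ⊆
      G.edgeFinset.filter fun f => vertexEdgeDist G u f < vertexEdgeDist G v f := by
    intro f hf
    obtain ⟨hne, hf, huf⟩ := by simpa only [mem_erase, mem_incidenceFinset] using hf
    refine mem_filter.mpr ⟨mem_edgeFinset.mpr hf, ?_⟩
    obtain ⟨y, rfl⟩ := (Sym2.mem_iff_exists).mp huf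
    have hyv : y ≠ v := by rintro rfl; exact hne rfl
    have hvy : 0 < G.dist v y :=
      (huv.symm.reachable.trans (show G.Adj u y from hf).reachable).pos_dist_of_ne hyv.symm
    simp only [vertexEdgeDist_mk, dist_self, dist_eq_one_iff_adj.mpr huv.symm]
    omega
  calc G.degree u - 1 = ((G.incidenceFinset u).erase s(u, v)).card := by
        rw [card_erase_of_mem (by simpa using huv), card_incidenceFinset_eq_degree]
    _ ≤ mCloser G u v := card_le_card hsub

lemma mCloser_le_one_of_adj_of_two_lt_degree (h : MinCloserEqOne G) {u x : V} (hux : G.Adj u x)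
    (hu : 2 < G.degree u) : mCloser G x u ≤ 1 := by
  have := degree_sub_one_le_mCloser hux
  have := h u x hux
  omega

lemma degree_le_two_of_adj_of_two_lt_degree (h : MinCloserEqOne G) {u x : V} (hux : G.Adj u x)
    (hu : 2 < G.degree u) : G.degree x ≤ 2 := by
  have := degree_sub_one_le_mCloser hux.symm
  have := mCloser_le_one_of_adj_of_two_lt_degree h hux hu
  omega

lemma eq_of_closer_of_adj_of_two_lt_degree (h : MinCloserEqOne G) {u x : V} (hux : G.Adj u x)
    (hu : 2 < G.degree u) {e f : Sym2 V} (he : e ∈ G.edgeSet) (hf : f ∈ G.edgeSet)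
    (hex : vertexEdgeDist G x e < vertexEdgeDist G u e)
    (hfx : vertexEdgeDist G x f < vertexEdgeDist G u f) : e = f :=
  card_le_one.mp (mCloser_le_one_of_adj_of_two_lt_degree h hux hu)
    e (by simpa using ⟨he, hex⟩) f (by simpa using ⟨hf, hfx⟩)

lemma dist_eq_two_of_two_lt_degree (hG : G.Connected) (h : MinCloserEqOne G) {u v : V}
    (hu : 2 < G.degree u) (hv : 2 < G.degree v) (huv : u ≠ v) : G.dist u v = 2 := by
  have hk0 : 0 < G.dist u v := hG.pos_dist_of_ne huv
  have hk1 : G.dist u v ≠ 1 := fun h1 =>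
    (degree_le_two_of_adj_of_two_lt_degree h (dist_eq_one_iff_adj.mp h1) hu).not_gt hv
  by_contra hk2
  obtain ⟨x, hux, hxv⟩ := (hG.preconnected u v).exists_adj_dist_add_one_eq huv
  have hxv' : x ≠ v := by rintro rfl; simp only [dist_self] at hxv; omega
  obtain ⟨x', hxx', hx'v⟩ := (hG.preconnected x v).exists_adj_dist_add_one_eq hxv'
  obtain ⟨y, hvy, hyx⟩ := (hG.preconnected v x).exists_adj_dist_add_one_eq hxv'.symm
  have hux1 := dist_eq_one_iff_adj.mpr hux
  have hux' := hG.dist_triangle (u := u) (v := x') (w := v)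
  have huy := hG.dist_triangle (u := u) (v := y) (w := v)
  rw [dist_comm (u := y), dist_comm (u := v)] at hyx
  rw [dist_comm (u := y), dist_eq_one_iff_adj.mpr hvy] at huy
  have hedge := eq_of_closer_of_adj_of_two_lt_degree h hux hu (e := s(x, x')) (f := s(y, v))
    hxx' hvy.symm (by simp only [vertexEdgeDist_mk, dist_self]; omega)
    (by simp only [vertexEdgeDist_mk]; omega)
  rcases Sym2.eq_iff.mp hedge with ⟨rfl, -⟩ | ⟨rfl, -⟩
  · omega
  · exact hxv' rfl

lemma adj_of_adj_of_dist_eq_two (hG : G.Connected) (h : MinCloserEqOne G) {a w z : V}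
    (ha : 2 < G.degree a) (haw : G.dist a w = 2) (hwz : G.Adj w z) : G.Adj a z := by
  obtain ⟨y, hay, hyw⟩ :=
    (hG.preconnected a w).exists_adj_dist_add_one_eq (by rintro rfl; simp at haw)
  by_contra haz
  have hza : z ≠ a := by
    rintro rfl
    rw [dist_comm, dist_eq_one_iff_adj.mpr hwz] at haw
    omega
  have haz2 : 1 < G.dist a z := hG.one_lt_dist_of_ne_of_not_adj hza.symm haz
  have hyw' : G.Adj y w := dist_eq_one_iff_adj.mp (by omega)
  have hedge := eq_of_closer_of_adj_of_two_lt_degree h hay ha (e := s(y, w)) (f := s(w, z))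
    hyw' hwz (by simp only [vertexEdgeDist_mk, dist_self, dist_eq_one_iff_adj.mpr hay]; omega)
    (by simp only [vertexEdgeDist_mk]; omega)
  rcases Sym2.eq_iff.mp hedge with ⟨rfl, -⟩ | ⟨rfl, -⟩
  · exact hyw'.ne rfl
  · exact haz hay

lemma card_filter_two_lt_degree_le_two (hG : G.Connected) (h : MinCloserEqOne G) :
    (univ.filter fun w : V => 2 < G.degree w).card ≤ 2 := by
  by_contra! hlt
  obtain ⟨u, v, w, hu, hv, hw, huv, huw, hvw⟩ := two_lt_card_iff.mp hlt
  simp only [mem_filter, mem_univ, true_and] at hu hv hw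
  obtain ⟨z, hwz⟩ := (G.degree_pos_iff_exists_adj w).mp (by omega)
  have huz := adj_of_adj_of_dist_eq_two hG h hu (dist_eq_two_of_two_lt_degree hG h hu hw huw) hwz
  have hvz := adj_of_adj_of_dist_eq_two hG h hv (dist_eq_two_of_two_lt_degree hG h hv hw hvw) hwz
  have hz : 2 < G.degree z :=
    calc 2 < ({u, v, w} : Finset V).card := by
          rw [card_insert_of_notMem (by simp [huv, huw]), card_insert_of_notMem (by simp [hvw]),
            card_singleton]
          omega
      _ ≤ G.degree z := by
          rw [← card_neighborFinset_eq_degree]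
          exact card_le_card (by simp [insert_subset_iff, huz.symm, hvz.symm, hwz.symm])
  exact (degree_le_two_of_adj_of_two_lt_degree h hwz hw).not_gt hz

end PaperDefs

/-- If a connected graph in which every edge `e = uv` satisfies
`min(m_u(e), m_v(e)) = 1` has at least two branching vertices (degree `> 2`), then it has
exactly two of them and any two distinct branching vertices are at distance `2`. -/
theorem stmt_7 {V : Type*} [Fintype V] (G : SimpleGraph V) (hG : G.Connected)
    (h : ∀ u v : V, G.Adj u v → min (mCloser G u v) (mCloser G v u) = 1)
    (hbr : ∃ u v : V, u ≠ v ∧ 2 < G.degree u ∧ 2 < G.degree v) :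
    (Finset.univ.filter fun w : V => 2 < G.degree w).card = 2 ∧
      ∀ u v : V, 2 < G.degree u → 2 < G.degree v → u ≠ v → G.dist u v = 2 := by
  obtain ⟨u, v, huv, hu, hv⟩ := hbr
  have hge : 1 < (Finset.univ.filter fun w : V => 2 < G.degree w).card :=
    one_lt_card_iff.mpr ⟨u, v, by simpa using hu, by simpa using hv, huv⟩
  exact ⟨(card_filter_two_lt_degree_le_two hG h).antisymm hge,
    fun _ _ ha hb hab => dist_eq_two_of_two_lt_degree hG h ha hb hab⟩
end

section
/- Let G be a connected simple graph with m edges and diameter 2, such that every edge of G belongs to exactly t triangles. Then Sz(G) = M_2(G) − t·M_1(G) + m·t². -/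
/-!
Distance-based topological indices (PI, vertex PI, Szeged, edge Szeged, Zagreb indices,
triangle counts) for finite simple graphs, following Ilić, "Note on PI and Szeged indices".
-/

open scoped Classical
open Finset

open PaperDefs

/-!
If every distance in `G` is at most `2` and `uv` is an edge, a vertex is strictly closer to `u`
than to `v` exactly when it is `u` itself or a neighbour of `u` other than `v` that is not adjacent
to `v`. Hence `n_u(uv) = deg u - t(uv)`, so `Sz(G) = Σ_{uv ∈ E} (deg u - t)(deg v - t)`, and the
formula follows from `Σ_{uv ∈ E} (deg u + deg v) = Σ_v deg(v)² = M₁(G)`.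
-/

namespace SimpleGraph

section Distance

variable {V : Type*} {G : SimpleGraph V}

theorem dist_le_two_of_ediam_le_two (hG : G.ediam ≤ 2) (a b : V) : G.dist a b ≤ 2 :=
  ENat.toNat_le_of_le_natCast (edist_le_ediam.trans hG)

theorem reachable_of_ediam_le_two (hG : G.ediam ≤ 2) (a b : V) : G.Reachable a b :=
  reachable_of_edist_ne_top (ne_top_of_le_ne_top (by decide) (edist_le_ediam.trans hG))

theorem dist_lt_dist_iff_of_ediam_le_two (hG : G.ediam ≤ 2) {u v : V} (huv : G.Adj u v)
    (w : V) : G.dist w u < G.dist w v ↔ w = u ∨ G.Adj u w ∧ ¬(w = v ∨ G.Adj v w) := by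
  have hzero (a b : V) : G.dist a b = 0 ↔ a = b :=
    (reachable_of_ediam_le_two hG a b).dist_eq_zero_iff
  have hone (a b : V) : G.dist a b = 1 ↔ G.Adj a b := dist_eq_one_iff_adj
  have hwv := dist_le_two_of_ediam_le_two hG w v
  constructor
  · intro hlt
    by_cases hwu : w = u
    · exact .inl hwu
    have hadj : G.Adj w u := (hone w u).mp (by have := (hzero w u).not.mpr hwu; omega)
    refine .inr ⟨hadj.symm, ?_⟩
    rintro (rfl | hvw)
    · simp at hlt
    · rw [(hone w v).mpr hvw.symm] at hlt
      exact hwu ((hzero w u).mp (by omega))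
  · rintro (rfl | ⟨huw, hw⟩)
    · rw [dist_self, (hone w v).mpr huv]; omega
    · push Not at hw
      rw [(hone w u).mpr huw.symm]
      have := (hzero w v).not.mpr hw.1
      have := (hone w v).not.mpr (fun h => hw.2 h.symm)
      omega

end Distance

variable {V : Type*} [Fintype V] (G : SimpleGraph V)

theorem sum_edgeFinset_lift_add_eq_sum_degree_smul {M : Type*} [AddCommMonoid M] (f : V → M) :
    ∑ e ∈ G.edgeFinset, Sym2.lift ⟨fun u v => f u + f v, fun _ _ => add_comm _ _⟩ e =
      ∑ v, G.degree v • f v := by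
  have hedge : ∀ e ∈ G.edgeFinset,
      Sym2.lift ⟨fun u v => f u + f v, fun _ _ => add_comm _ _⟩ e = ∑ v with v ∈ e, f v := by
    intro e he
    induction e using Sym2.ind with
    | h x y =>
      have hxy : x ≠ y := G.ne_of_adj (mem_edgeFinset.mp he)
      have : ({v | v ∈ s(x, y)} : Finset V) = {x, y} := by ext; simp
      rw [Sym2.lift_mk, this, sum_pair hxy]
  simp_rw [sum_congr rfl hedge, sum_filter, ← card_incidenceFinset_eq_degree,
    incidenceFinset_eq_filter, card_eq_sum_ones, sum_smul, one_smul, sum_filter]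
  exact sum_comm

end SimpleGraph

namespace PaperDefs

open SimpleGraph

variable {V : Type*} [Fintype V] {G : SimpleGraph V}

theorem nCloser_add_triEdge_of_ediam_le_two (hG : G.ediam ≤ 2) {u v : V} (huv : G.Adj u v) :
    nCloser G u v + triEdge G u v = G.degree u := by
  set P : V → Prop := fun w => w = v ∨ G.Adj v w
  have hcloser : ({w | G.dist w u < G.dist w v} : Finset V) =
      insert u ({w ∈ G.neighborFinset u | ¬P w}) := by
    ext w
    simp [dist_lt_dist_iff_of_ediam_le_two hG huv w, P]
  have hcommon : ({w ∈ G.neighborFinset u | P w}) =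
      insert v ({w | G.Adj u w ∧ G.Adj v w} : Finset V) := by
    ext w
    simp only [mem_filter, mem_neighborFinset, mem_insert, mem_univ, true_and, P]
    constructor
    · rintro ⟨huw, rfl | hvw⟩
      exacts [.inl rfl, .inr ⟨huw, hvw⟩]
    · rintro (rfl | h)
      exacts [⟨huv, .inl rfl⟩, ⟨h.1, .inr h.2⟩]
  have hu : u ∉ ({w ∈ G.neighborFinset u | ¬P w}) := by simp
  have hv : v ∉ ({w | G.Adj u w ∧ G.Adj v w} : Finset V) := by simp
  have hsplit := card_filter_add_card_filter_not (s := G.neighborFinset u) P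
  rw [hcommon, card_insert_of_notMem hv, card_neighborFinset_eq_degree] at hsplit
  rw [nCloser, triEdge, hcloser, card_insert_of_notMem hu]
  omega

end PaperDefs

theorem stmt_10_general {V : Type*} [Fintype V] (G : SimpleGraph V)
    (hdiam : G.diam = 2) (t : ℕ) (ht : ∀ u v : V, G.Adj u v → triEdge G u v = t) :
    (Sz G : ℤ) = M2 G - t * M1 G + G.edgeFinset.card * t ^ 2 := by
  have hediam : G.ediam ≤ 2 := by
    rw [← ENat.natCast_toNat (G.ediam_ne_top_of_diam_ne_zero (by omega))]
    exact_mod_cast hdiam.le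
  have hcloser (u v : V) (huv : G.Adj u v) : (nCloser G u v : ℤ) = G.degree u - t := by
    have := nCloser_add_triEdge_of_ediam_le_two hediam huv
    rw [ht u v huv] at this
    omega
  have hM1 : M1 G = ∑ e ∈ G.edgeFinset,
      Sym2.lift ⟨fun u v => G.degree u + G.degree v, fun _ _ => add_comm _ _⟩ e := by
    simp [G.sum_edgeFinset_lift_add_eq_sum_degree_smul, M1, sq]
  simp only [Sz, M2, hM1, Nat.cast_sum, mul_sum, card_eq_sum_ones, sum_mul, ← sum_sub_distrib,
    ← sum_add_distrib]
  refine sum_congr rfl fun e he => ?_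
  induction e using Sym2.ind with
  | h u v =>
    have huv : G.Adj u v := SimpleGraph.mem_edgeFinset.mp he
    simp only [Sym2.lift_mk]
    push_cast
    rw [hcloser u v huv, hcloser v u huv.symm]
    ring

/-- For a connected graph `G` with `m` edges and diameter `2` in which every
edge lies in exactly `t` triangles, `Sz(G) = M₂(G) - t·M₁(G) + m·t²`. -/
theorem stmt_10 {V : Type*} [Fintype V] (G : SimpleGraph V) (hG : G.Connected)
    (hdiam : G.diam = 2) (t : ℕ) (ht : ∀ u v : V, G.Adj u v → triEdge G u v = t) :
    (Sz G : ℤ) = M2 G - t * M1 G + G.edgeFinset.card * t ^ 2 :=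
  stmt_10_general G hdiam t ht
end

section
/- Let G = K_{n_1, n_2, …, n_k} be a complete k-partite graph with n vertices and m edges. Then PI_v(G) = n·m − 3·t(G); more precisely, for every edge e = uv of G one has n_u(e) + n_v(e) = n − t(e), where t(e) is the number of triangles containing e. -/
/-!
Distance-based topological indices (PI, vertex PI, Szeged, edge Szeged, Zagreb indices,
triangle counts) for finite simple graphs, following Ilić, "Note on PI and Szeged indices".
-/

open scoped Classical
open Finset

open PaperDefs

/-!
Each vertex `w` is closer to `u`, closer to `v`, or equidistant from the ends of an edge `uv`.
Since `u` and `v` lie in different parts, every vertex is adjacent to `u` or to `v`, and a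
vertex at distance `1` from one end is equidistant from both exactly when it is adjacent to
both. Hence the equidistant vertices are the `t(e)` common neighbours of `u` and `v`. Summing
over the edges counts every triangle once for each of its three edges.
-/

namespace PaperDefs

open SimpleGraph

variable {V : Type*}

theorem nCloser_add_nCloser_add_card_dist_eq [Fintype V] (G : SimpleGraph V) (u v : V) :
    nCloser G u v + nCloser G v u + #{w | G.dist w u = G.dist w v} = Fintype.card V := by
  rw [nCloser, nCloser, card_filter, card_filter, card_filter, ← sum_add_distrib,
    ← sum_add_distrib, ← card_univ, card_eq_sum_ones]
  refine sum_congr rfl fun w _ => ?_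
  split_ifs <;> omega

theorem dist_eq_dist_iff_adj_and_adj {G : SimpleGraph V} {u v w : V}
    (hw : G.Adj u w ∨ G.Adj v w) :
    G.dist w u = G.dist w v ↔ G.Adj u w ∧ G.Adj v w := by
  rcases hw with hw | hw
  · rw [dist_eq_one_iff_adj.2 hw.symm, eq_comm, dist_eq_one_iff_adj, G.adj_comm w v]
    exact ⟨fun h => ⟨hw, h⟩, And.right⟩
  · rw [dist_eq_one_iff_adj.2 hw.symm, dist_eq_one_iff_adj, G.adj_comm w u]
    exact ⟨fun h => ⟨h, hw⟩, And.left⟩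

theorem nCloser_add_nCloser_add_triEdge [Fintype V] {G : SimpleGraph V} {u v : V}
    (hdom : ∀ w, G.Adj u w ∨ G.Adj v w) :
    nCloser G u v + nCloser G v u + triEdge G u v = Fintype.card V := by
  rw [← nCloser_add_nCloser_add_card_dist_eq G u v, triEdge]
  congr 2
  exact filter_congr fun w _ => (dist_eq_dist_iff_adj_and_adj (hdom w)).symm

theorem adj_or_adj_of_adj_iff_ne {ι : Type*} {G : SimpleGraph V} {f : V → ι}
    (hf : ∀ u v : V, G.Adj u v ↔ f u ≠ f v) {u v : V} (h : G.Adj u v) (w : V) :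
    G.Adj u w ∨ G.Adj v w := by
  simp only [hf] at h ⊢
  by_contra! hw
  exact h (hw.1.trans hw.2.symm)

theorem _root_.SimpleGraph.IsClique.card_filter_mem_sym2_edgeFinset [Fintype V] {G : SimpleGraph V} {s : Finset V}
    (hs : G.IsClique (s : Set V)) :
    #{e ∈ G.edgeFinset | e ∈ s.sym2} = (#s).choose 2 := by
  rw [← Sym2.card_image_offDiag]
  congr 1
  ext e
  induction e using Sym2.ind with
  | _ x y =>
    simp only [mem_filter, mem_edgeFinset, mem_edgeSet, mk_mem_sym2_iff, mem_image, mem_offDiag,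
      Prod.exists, Function.uncurry_apply_pair, Sym2.eq_iff]
    constructor
    · rintro ⟨hxy, hx, hy⟩
      exact ⟨x, y, ⟨hx, hy, hxy.ne⟩, Or.inl ⟨rfl, rfl⟩⟩
    · rintro ⟨a, b, ⟨ha, hb, hab⟩, ⟨rfl, rfl⟩ | ⟨rfl, rfl⟩⟩
      · exact ⟨hs ha hb hab, ha, hb⟩
      · exact ⟨hs hb ha hab.symm, hb, ha⟩

theorem card_cliqueFinset_three_filter_mem_sym2 [Fintype V] {G : SimpleGraph V} {u v : V}
    (h : G.Adj u v) :
    #{s ∈ G.cliqueFinset 3 | s(u, v) ∈ s.sym2} = triEdge G u v := by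
  symm
  refine card_bij (fun w _ => {u, v, w}) (fun w hw => ?_) (fun w hw w' _ heq => ?_)
    (fun s hs => ?_)
  · simp only [mem_filter, mem_univ, true_and] at hw
    simp only [mem_filter, mem_cliqueFinset_iff, is3Clique_triple_iff, mk_mem_sym2_iff]
    exact ⟨⟨h, hw⟩, by simp, by simp⟩
  · simp only [mem_filter, mem_univ, true_and] at hw
    have : w ∈ ({u, v, w'} : Finset V) := heq ▸ by simp
    simp only [mem_insert, mem_singleton] at this
    rcases this with rfl | rfl | rfl
    · exact absurd hw.1 (G.loopless.irrefl _)
    · exact absurd hw.2 (G.loopless.irrefl _)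
    · rfl
  · simp only [mem_filter, mem_cliqueFinset_iff, mk_mem_sym2_iff] at hs
    obtain ⟨hs, hu, hv⟩ := hs
    have huv : {u, v} ⊆ s := by simp [insert_subset_iff, hu, hv]
    obtain ⟨w, hw⟩ : ∃ w, s \ {u, v} = {w} := card_eq_one.1 <| by
      rw [card_sdiff_of_subset huv, hs.card_eq, card_pair h.ne]
    have hws : w ∈ s ∧ w ≠ u ∧ w ≠ v := by
      simpa using hw.symm.subset (mem_singleton_self w)
    refine ⟨w, ?_, ?_⟩
    · simp only [mem_filter, mem_univ, true_and]
      exact ⟨hs.1 hu hws.1 hws.2.1.symm, hs.1 hv hws.1 hws.2.2.symm⟩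
    · rw [← union_sdiff_of_subset huv, hw, insert_union, singleton_union]

theorem sum_card_cliqueFinset_three_filter_mem_sym2 [Fintype V] (G : SimpleGraph V) :
    ∑ e ∈ G.edgeFinset, #{s ∈ G.cliqueFinset 3 | e ∈ s.sym2} = 3 * #(G.cliqueFinset 3) := by
  have := sum_card_bipartiteAbove_eq_sum_card_bipartiteBelow (s := G.edgeFinset)
    (t := G.cliqueFinset 3) (r := fun e s => e ∈ s.sym2)
  simp only [bipartiteAbove, bipartiteBelow] at this
  rw [this, sum_const_nat fun s hs => ?_, mul_comm]
  rw [mem_cliqueFinset_iff] at hs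
  rw [hs.isClique.card_filter_mem_sym2_edgeFinset, hs.card_eq]
  rfl

end PaperDefs

/-- For a complete multipartite graph `G` (adjacency = lying in different
parts) with `n` vertices and `m` edges, every edge `e = uv` satisfies
`n_u(e) + n_v(e) = n - t(e)`, and consequently `PI_v(G) = n m - 3 t(G)`. -/
theorem stmt_13 {V : Type*} [Fintype V] {ι : Type*} (G : SimpleGraph V) (f : V → ι)
    (hf : ∀ u v : V, G.Adj u v ↔ f u ≠ f v) :
    (∀ u v : V, G.Adj u v →
        (nCloser G u v + nCloser G v u : ℤ) = Fintype.card V - triEdge G u v) ∧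
      (PIv G : ℤ) = Fintype.card V * G.edgeFinset.card - 3 * triCount G := by
  have hedge (u v : V) (h : G.Adj u v) :
      nCloser G u v + nCloser G v u + triEdge G u v = Fintype.card V :=
    nCloser_add_nCloser_add_triEdge (adj_or_adj_of_adj_iff_ne hf h)
  refine ⟨fun u v h => by have := hedge u v h; omega, ?_⟩
  have hPI : PIv G + 3 * triCount G = Fintype.card V * #G.edgeFinset := by
    rw [PIv, triCount, ← sum_card_cliqueFinset_three_filter_mem_sym2, ← sum_add_distrib,
      sum_const_nat fun e he => ?_, mul_comm]
    induction e using Sym2.ind with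
    | _ u v =>
      have huv : G.Adj u v := G.mem_edgeFinset.1 he
      rw [Sym2.lift_mk, card_cliqueFinset_three_filter_mem_sym2 huv]
      exact hedge u v huv
  omega
end

section
/- Let G be a simple graph with n vertices and m edges. Then 32·m·n·Sz(G) ≤ (n + 2)²·PI_v(G)², with equality if and only if m = 0 or n = 2. -/
/-!
Distance-based topological indices (PI, vertex PI, Szeged, edge Szeged, Zagreb indices,
triangle counts) for finite simple graphs, following Ilić, "Note on PI and Szeged indices".
-/

open scoped Classical
open Finset

open PaperDefs

/-!
For an edge `uv` with `p = n_u(e)` and `q = n_v(e)` we have `1 ≤ p, q`, `p + q ≤ n` and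
`(n + 2)(p + q) - 4pq - 2n = (p - q)² + (p + q - 2)(n - p - q) ≥ 0`. Summing over the edges gives
`4 Sz + 2nm ≤ (n + 2) PI_v`, and AM-GM `4ab ≤ (a + b)²` for `a = 4 Sz`, `b = 2nm` gives the
bound.

At equality `4 Sz = 2nm` and every edge has `p + q = 2` or `p + q = n`. When `n ≥ 3`, an edge with
`p + q = n` has no equidistant vertex, so `G` is connected, and every edge sharing an endpoint with
it again has `p + q = n`. Hence `p + q` is a constant `s` on all edges, so `PI_v = sm`, and
`4nm = (n + 2) PI_v` becomes `4n = (n + 2)s`, which fails for `s ∈ {2, n}`.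
-/

namespace PaperDefs

variable {V : Type*} [Fintype V] {G : SimpleGraph V}

lemma four_mul_add_le_of_add_le {n p q : ℕ} (hp : 1 ≤ p) (hq : 1 ≤ q) (hpq : p + q ≤ n) :
    4 * (p * q) + 2 * n ≤ (n + 2) * (p + q) := by
  have hslack : (0 : ℤ) ≤ (p + q - 2) * (n - (p + q)) :=
    mul_nonneg (by omega) (by omega)
  zify
  nlinarith [sq_nonneg ((p : ℤ) - q)]

lemma add_eq_two_or_add_eq_of_four_mul_add_eq {n p q : ℕ} (hp : 1 ≤ p) (hq : 1 ≤ q)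
    (hpq : p + q ≤ n) (h : 4 * (p * q) + 2 * n = (n + 2) * (p + q)) :
    p + q = 2 ∨ p + q = n := by
  have hslack : (p + q - 2 : ℤ) * (n - (p + q)) = 0 := by
    have hnonneg : (0 : ℤ) ≤ (p + q - 2) * (n - (p + q)) := mul_nonneg (by omega) (by omega)
    zify at h
    nlinarith [sq_nonneg ((p : ℤ) - q)]
  rcases mul_eq_zero.1 hslack with h2 | hn
  · left; omega
  · right; omega

lemma eq_and_add_eq_of_four_mul_eq_sq {a b c : ℕ} (h : 4 * a * b = c ^ 2) (hc : a + b ≤ c) :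
    a = b ∧ a + b = c := by
  have hsq : c ^ 2 ≤ (a + b) ^ 2 := h ▸ four_mul_le_sq_add a b
  have hsum : a + b = c := le_antisymm hc (Nat.pow_le_pow_iff_left two_ne_zero |>.1 hsq)
  refine ⟨?_, hsum⟩
  subst hsum
  zify at h
  nlinarith [sq_nonneg ((a : ℤ) - b)]

lemma two_le_card_of_card_edgeFinset_ne_zero (hm : #G.edgeFinset ≠ 0) :
    2 ≤ Fintype.card V := by
  by_contra! h
  exact hm (Nat.eq_zero_of_le_zero
    (G.card_edgeFinset_le_card_choose_two.trans (Nat.choose_eq_zero_of_lt h).le))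

lemma forall_mem_edgeFinset {P : Sym2 V → Prop} (h : ∀ u v, G.Adj u v → P s(u, v)) :
    ∀ e ∈ G.edgeFinset, P e := by
  intro e he
  induction e using Sym2.ind with
  | _ u v => exact h u v (G.mem_edgeFinset.1 he)

lemma sum_edgeFinset_lift_eq_mul_card {f : {f : V → V → ℕ // ∀ a b, f a b = f b a}} {c : ℕ}
    (h : ∀ u v, G.Adj u v → f.1 u v = c) :
    ∑ e ∈ G.edgeFinset, Sym2.lift f e = c * #G.edgeFinset := by
  rw [sum_congr rfl (forall_mem_edgeFinset (P := fun e => Sym2.lift f e = c) h), sum_const,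
    smul_eq_mul, mul_comm]

lemma nCloser_add_nCloser (u v : V) :
    nCloser G u v + nCloser G v u = #{w | G.dist w u ≠ G.dist w v} := by
  rw [nCloser, nCloser, ← card_union_of_disjoint
    (disjoint_filter.2 fun _ _ h₁ h₂ => lt_asymm h₁ h₂), ← filter_or]
  simp only [ne_iff_lt_or_gt]

lemma nCloser_add_nCloser_le (u v : V) : nCloser G u v + nCloser G v u ≤ Fintype.card V :=
  nCloser_add_nCloser u v ▸ card_le_univ _

lemma dist_ne_of_nCloser_add_nCloser_eq_card {u v : V}
    (hs : nCloser G u v + nCloser G v u = Fintype.card V) (w : V) :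
    G.dist w u ≠ G.dist w v := by
  rw [nCloser_add_nCloser] at hs
  have hw : w ∈ ({w | G.dist w u ≠ G.dist w v} : Finset V) := by
    rw [eq_univ_of_card _ hs]
    exact mem_univ w
  simpa using hw

lemma self_mem_closer {u v : V} (h : G.Adj u v) :
    u ∈ ({w | G.dist w u < G.dist w v} : Finset V) := by
  simp [SimpleGraph.dist_eq_one_iff_adj.2 h]

lemma one_le_nCloser {u v : V} (h : G.Adj u v) : 1 ≤ nCloser G u v :=
  card_pos.2 ⟨u, self_mem_closer h⟩

lemma dist_le_of_nCloser_eq_one {u v w : V} (h : G.Adj u v) (h1 : nCloser G u v = 1)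
    (hw : w ≠ u) : G.dist w v ≤ G.dist w u := by
  by_contra! hlt
  exact hw (card_le_one.1 h1.le w (by simpa using hlt) u (self_mem_closer h))

lemma nCloser_eq_one_of_card_le_two (hn : Fintype.card V ≤ 2) {u v : V} (h : G.Adj u v) :
    nCloser G u v = 1 := by
  have := nCloser_add_nCloser_le (G := G) u v
  have := one_le_nCloser h
  have := one_le_nCloser h.symm
  omega

lemma reachable_of_nCloser_add_nCloser_eq_card {u v : V} (h : G.Adj u v)
    (hs : nCloser G u v + nCloser G v u = Fintype.card V) (w : V) : G.Reachable u w := by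
  by_contra hr
  have hu : G.dist w u = 0 := SimpleGraph.dist_eq_zero_of_not_reachable fun h' => hr h'.symm
  have hv : G.dist w v = 0 :=
    SimpleGraph.dist_eq_zero_of_not_reachable fun h' => hr (h'.trans h.symm.reachable).symm
  exact dist_ne_of_nCloser_add_nCloser_eq_card hs w (hu.trans hv.symm)

-- If `n_a(ac) = n_c(ac) = 1`, then `b` is equidistant from `a` and `c`, so `b ~ c` and
-- `c` is equidistant from `a` and `b`.
lemma nCloser_add_nCloser_ne_two_of_adj {a b c : V} (hab : G.Adj a b)
    (hs : nCloser G a b + nCloser G b a = Fintype.card V) (hac : G.Adj a c) (hcb : c ≠ b) :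
    nCloser G a c + nCloser G c a ≠ 2 := by
  intro h2
  have h1 := one_le_nCloser hac
  have h1' := one_le_nCloser hac.symm
  have hbc : G.dist b c ≤ G.dist b a := dist_le_of_nCloser_eq_one hac (by omega) hab.ne'
  have hba : G.dist b a ≤ G.dist b c := dist_le_of_nCloser_eq_one hac.symm (by omega) hcb.symm
  have hca : G.dist c a = 1 := SimpleGraph.dist_eq_one_iff_adj.2 hac.symm
  have hab1 : G.dist b a = 1 := SimpleGraph.dist_eq_one_iff_adj.2 hab.symm
  refine dist_ne_of_nCloser_add_nCloser_eq_card hs c ?_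
  rw [hca, SimpleGraph.dist_comm]
  omega

lemma nCloser_add_nCloser_eq_card_of_adj
    (hdich : ∀ a b, G.Adj a b →
      nCloser G a b + nCloser G b a = 2 ∨ nCloser G a b + nCloser G b a = Fintype.card V)
    {a b c : V} (hab : G.Adj a b)
    (hs : nCloser G a b + nCloser G b a = Fintype.card V) (hac : G.Adj a c) :
    nCloser G a c + nCloser G c a = Fintype.card V := by
  by_cases hcb : c = b
  · exact hcb ▸ hs
  · exact (hdich a c hac).resolve_left (nCloser_add_nCloser_ne_two_of_adj hab hs hac hcb)

lemma nCloser_add_nCloser_eq_card_of_walk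
    (hdich : ∀ a b, G.Adj a b →
      nCloser G a b + nCloser G b a = 2 ∨ nCloser G a b + nCloser G b a = Fintype.card V)
    {a w : V}
    (ha : ∀ c, G.Adj a c → nCloser G a c + nCloser G c a = Fintype.card V) (p : G.Walk a w) :
    ∀ c, G.Adj w c → nCloser G w c + nCloser G c w = Fintype.card V := by
  induction p with
  | nil => exact ha
  | cons h _ ih =>
    refine ih fun c hc => nCloser_add_nCloser_eq_card_of_adj hdich h.symm ?_ hc
    rw [add_comm]
    exact ha _ h

lemma forall_adj_eq_two_or_forall_adj_eq_card (hn : 3 ≤ Fintype.card V)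
    (hdich : ∀ a b, G.Adj a b →
      nCloser G a b + nCloser G b a = 2 ∨ nCloser G a b + nCloser G b a = Fintype.card V) :
    (∀ a b, G.Adj a b → nCloser G a b + nCloser G b a = 2) ∨
      ∀ a b, G.Adj a b → nCloser G a b + nCloser G b a = Fintype.card V := by
  by_contra! ⟨⟨u, v, huv, hs⟩, ⟨x, y, hxy, hs'⟩⟩
  replace hs := (hdich u v huv).resolve_left hs
  replace hs' := (hdich x y hxy).resolve_right hs'
  obtain ⟨p⟩ := reachable_of_nCloser_add_nCloser_eq_card huv hs x
  have := nCloser_add_nCloser_eq_card_of_walk hdich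
    (fun c => nCloser_add_nCloser_eq_card_of_adj hdich huv hs) p y hxy
  omega

lemma four_mul_Sz_add_eq_sum :
    4 * Sz G + 2 * Fintype.card V * #G.edgeFinset =
      ∑ e ∈ G.edgeFinset,
        (4 * Sym2.lift ⟨fun u v => nCloser G u v * nCloser G v u, fun _ _ => mul_comm _ _⟩ e
          + 2 * Fintype.card V) := by
  rw [sum_add_distrib, sum_const, ← mul_sum, smul_eq_mul, Sz, mul_comm _ #G.edgeFinset]

lemma four_mul_nCloser_mul_add_le {u v : V} (h : G.Adj u v) :
    4 * (nCloser G u v * nCloser G v u) + 2 * Fintype.card V ≤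
      (Fintype.card V + 2) * (nCloser G u v + nCloser G v u) :=
  four_mul_add_le_of_add_le (one_le_nCloser h) (one_le_nCloser h.symm) (nCloser_add_nCloser_le u v)

lemma four_mul_Sz_add_le :
    4 * Sz G + 2 * Fintype.card V * #G.edgeFinset ≤ (Fintype.card V + 2) * PIv G := by
  rw [four_mul_Sz_add_eq_sum, PIv, mul_sum]
  exact sum_le_sum (forall_mem_edgeFinset fun _ _ => four_mul_nCloser_mul_add_le)

lemma nCloser_add_nCloser_eq_two_or_eq_card
    (h : 4 * Sz G + 2 * Fintype.card V * #G.edgeFinset = (Fintype.card V + 2) * PIv G)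
    {u v : V} (huv : G.Adj u v) :
    nCloser G u v + nCloser G v u = 2 ∨ nCloser G u v + nCloser G v u = Fintype.card V := by
  rw [four_mul_Sz_add_eq_sum, PIv, mul_sum] at h
  have hedge := (sum_eq_sum_iff_of_le (forall_mem_edgeFinset fun _ _ =>
    four_mul_nCloser_mul_add_le)).1 h _ (G.mem_edgeFinset.2 huv : s(u, v) ∈ G.edgeFinset)
  exact add_eq_two_or_add_eq_of_four_mul_add_eq (one_le_nCloser huv) (one_le_nCloser huv.symm)
    (nCloser_add_nCloser_le u v) hedge

end PaperDefs

/-- For a simple graph `G` with `n` vertices and `m` edges,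
`32 m n Sz(G) ≤ (n + 2)² PI_v(G)²`, with equality iff `m = 0` or `n = 2`. -/
theorem stmt_18 {V : Type*} [Fintype V] (G : SimpleGraph V) :
    32 * G.edgeFinset.card * Fintype.card V * Sz G ≤
        (Fintype.card V + 2) ^ 2 * PIv G ^ 2 ∧
      (32 * G.edgeFinset.card * Fintype.card V * Sz G =
          (Fintype.card V + 2) ^ 2 * PIv G ^ 2 ↔
        G.edgeFinset.card = 0 ∨ Fintype.card V = 2) := by
  set n := Fintype.card V
  set m := #G.edgeFinset
  have hle : 4 * Sz G + 2 * n * m ≤ (n + 2) * PIv G := four_mul_Sz_add_le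
  have hfactor : 32 * m * n * Sz G = 4 * (4 * Sz G) * (2 * n * m) := by ring
  refine ⟨?_, fun heq => ?_, ?_⟩
  · calc 32 * m * n * Sz G ≤ (4 * Sz G + 2 * n * m) ^ 2 := hfactor ▸ four_mul_le_sq_add _ _
      _ ≤ (n + 2) ^ 2 * PIv G ^ 2 := by rw [← mul_pow]; gcongr
  · obtain ⟨hSz, hsum⟩ :=
      eq_and_add_eq_of_four_mul_eq_sq (by rw [← hfactor, heq, mul_pow]) hle
    by_contra! ⟨hm, hn⟩
    have hn3 : 3 ≤ n := by have := two_le_card_of_card_edgeFinset_ne_zero hm; omega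
    obtain ⟨s, hs, hPIv⟩ : ∃ s, (s = 2 ∨ s = n) ∧ PIv G = s * m := by
      rcases forall_adj_eq_two_or_forall_adj_eq_card hn3
        fun _ _ => nCloser_add_nCloser_eq_two_or_eq_card hsum with h | h
      exacts [⟨2, .inl rfl, sum_edgeFinset_lift_eq_mul_card h⟩,
        ⟨n, .inr rfl, sum_edgeFinset_lift_eq_mul_card h⟩]
    have : 4 * n = (n + 2) * s := by
      apply Nat.eq_of_mul_eq_mul_right (Nat.pos_of_ne_zero hm)
      rw [Nat.mul_assoc (n + 2), ← hPIv]; linarith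
    rcases hs with rfl | rfl <;> nlinarith
  · rintro (hm | hn)
    · simp [m, n, hm, PIv, card_eq_zero.1 hm]
    · have hone {u v : V} (h : G.Adj u v) : nCloser G u v = 1 :=
        nCloser_eq_one_of_card_le_two hn.le h
      have hSz : Sz G = 1 * m := sum_edgeFinset_lift_eq_mul_card fun _ _ h => by
        simp [hone h, hone h.symm]
      have hPIv : PIv G = 2 * m := sum_edgeFinset_lift_eq_mul_card fun _ _ h => by
        simp [hone h, hone h.symm]
      rw [hSz, hPIv, hn]
      ring
end
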